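/- Let n be a positive integer divisible by 6 and let (x,k), (y,l) ∈ P_{1,n}. Then ρ((x,k),(y,l)) ≤ d₁(φ_{1,n}(x,k), φ_{1,n}(y,l)) + 2. -/

import Mathlib

open scoped symmDiff

/-- Elements of the lamplighter group `Z₂ ≀ Z_n`: a set of lit lamps and a position. -/
abbrev Lamp (n : ℕ) := Set (ZMod n) × ZMod n

/-- Group multiplication `(x,g)·(y,h) = (x △ (g+y), g+h)`. -/
def lampMul {n : ℕ} (u v : Lamp n) : Lamp n :=
  (u.1 ∆ ((u.2 + ·) '' v.1), u.2 + v.2)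

/-- Group inverse in the lamplighter group. -/
def lampInv {n : ℕ} (u : Lamp n) : Lamp n :=
  ((· - u.2) '' u.1, -u.2)

/-- The generator `t = (∅, 1)`. -/
def lampT (n : ℕ) : Lamp n := (∅, 1)

/-- The generator `a = ({0}, 0)`. -/
def lampA (n : ℕ) : Lamp n := ({0}, 0)

/-- The generator `ta`. -/
def lampTA (n : ℕ) : Lamp n := lampMul (lampT n) (lampA n)

/-- Word metric w.r.t. a generating set `S`: the least `m` such that `u⁻¹v`
is a product of `m` elements of `S ∪ S⁻¹`, i.e. `v = u·s₁⋯s_m`. -/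
noncomputable def wordDist {n : ℕ} (S : Set (Lamp n)) (u v : Lamp n) : ℕ :=
  sInf {m | ∃ w : List (Lamp n), w.length = m ∧
    (∀ s ∈ w, s ∈ S ∨ ∃ g ∈ S, s = lampInv g) ∧ v = w.foldl lampMul u}

/-- The word metric `ρ` on `Z₂ ≀ Z_n` w.r.t. the generating set `{t, ta}`. -/
noncomputable def lampDist (n : ℕ) (u v : Lamp n) : ℕ :=
  wordDist {lampT n, lampTA n} u v

/-- Length of the longest common prefix of two vertices of the binary tree. -/
def lgc : List Bool → List Bool → ℕ
  | a :: as, b :: bs => if a = b then lgc as bs + 1 else 0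
  | _, _ => 0

/-- Graph distance in the binary tree (vertices = `{0,1}`-sequences). -/
def treeDist (A B : List Bool) : ℕ := A.length + B.length - 2 * lgc A B

/-- The arc `{a, a+1, ..., a+m}` in `Z_n`. -/
def arcSet (n : ℕ) (a : ZMod n) (m : ℕ) : Set (ZMod n) :=
  {z | ∃ i ≤ m, z = a + (i : ZMod n)}

/-- The arc `P₁ = {n/6, ..., 5n/6}` of `Z_n` (identified with `{0,...,n-1}` via `val`). -/
def P1set (n : ℕ) : Set (ZMod n) := {z | n / 6 ≤ z.val ∧ z.val ≤ 5 * n / 6}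

/-- The subset `P_{1,n} = {(x,k) ∈ G_n : k ∈ P₁}`. -/
def lampP1 (n : ℕ) : Set (Lamp n) := {u | u.2 ∈ P1set n}

/-- The set `W_n ⊆ T_n × T_n`. -/
def Wset (n : ℕ) : Set (List Bool × List Bool) :=
  {p | p.1.length + p.2.length = n ∧ n / 6 ≤ p.1.length ∧ p.1.length ≤ 5 * n / 6}

open Classical in
/-- The map `φ_{1,n} : P_{1,n} → W_n`. -/
noncomputable def phi1 (n : ℕ) (u : Lamp n) : List Bool × List Bool :=
  ((List.range u.2.val).map fun j => if ((j : ℕ) : ZMod n) ∈ u.1 then true else false,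
   (List.range (n - u.2.val)).map fun i => if ((n - 1 - i : ℕ) : ZMod n) ∈ u.1 then true else false)

/-- "X admits an equivalent uniformly convex norm" (= superreflexivity, by Enflo). -/
def HasEquivUnifConvexNorm (X : Type*) [NormedAddCommGroup X] [NormedSpace ℝ X] : Prop :=
  ∃ N : X → ℝ,
    (∀ x, N x = 0 ↔ x = 0) ∧
    (∀ (c : ℝ) (x : X), N (c • x) = |c| * N x) ∧
    (∀ x y, N (x + y) ≤ N x + N y) ∧
    (∃ c₁ > (0 : ℝ), ∃ c₂ > (0 : ℝ), ∀ x, c₁ * ‖x‖ ≤ N x ∧ N x ≤ c₂ * ‖x‖) ∧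
    (∀ ε > (0 : ℝ), ∃ δ > (0 : ℝ), ∀ x y,
      N x ≤ 1 → N y ≤ 1 → ε ≤ N (x - y) → N (x + y) ≤ 2 - δ)

/-!
Let `p₁` and `p₂` be the lengths of the common prefixes of the left and of the right branches of
`φ(x,k)` and `φ(y,l)`. The lamps at `0, …, p₁ - 1` and at `n - p₂, …, n - 1` are read off those
prefixes, so `x` and `y` agree there and `x ∆ y` lies in the arc `[p₁, M]`, `M = max(k, l, n-1-p₂)`.
Walk from `k` to one end of the arc, sweep across it to the other end toggling the lamps of
`x ∆ y` (`ta` toggles the lamp it moves onto, `(ta)⁻¹` the lamp it leaves), and walk on to `l`.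
The sweep takes `M - p₁ + 1` steps, and the whole walk at most `2(n - p₁ - p₂) + 2`, which is
`d₁(φ(x,k), φ(y,l)) + 2`.
-/

theorem Nat.cast_sub_one_add_cast_sub {R : Type*} [AddCommGroupWithOne R] {p j : ℕ}
    (h : p ≤ j + 1) : (p : R) - 1 + ((j + 1 - p : ℕ) : R) = j := by
  rw [Nat.cast_sub h]
  push_cast
  abel

theorem Set.symmDiff_eq_symmDiff_sdiff_symmDiff_inter {α : Type*} (s t u : Set α) :
    s ∆ t = s ∆ (t \ u) ∆ (t ∩ u) := by
  ext
  simp only [Set.mem_symmDiff, Set.mem_sdiff, Set.mem_inter_iff]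
  tauto

section Walks

variable {n : ℕ}

def ReachIn (n m : ℕ) (u v : Lamp n) : Prop :=
  ∃ w : List (Lamp n), w.length = m ∧
    (∀ s ∈ w, s ∈ ({lampT n, lampTA n} : Set (Lamp n)) ∨
      ∃ g ∈ ({lampT n, lampTA n} : Set (Lamp n)), s = lampInv g) ∧
    v = w.foldl lampMul u

theorem lampDist_le_of_reachIn {m : ℕ} {u v : Lamp n} (h : ReachIn n m u v) :
    lampDist n u v ≤ m :=
  Nat.sInf_le h

theorem reachIn_zero (u : Lamp n) : ReachIn n 0 u u :=
  ⟨[], rfl, by simp, rfl⟩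

theorem ReachIn.trans {a b : ℕ} {u v w : Lamp n} (h₁ : ReachIn n a u v) (h₂ : ReachIn n b v w) :
    ReachIn n (a + b) u w := by
  obtain ⟨w₁, rfl, hgen₁, rfl⟩ := h₁
  obtain ⟨w₂, rfl, hgen₂, rfl⟩ := h₂
  refine ⟨w₁ ++ w₂, List.length_append, fun s hs => ?_, (List.foldl_append ..).symm⟩
  rcases List.mem_append.1 hs with hs | hs
  exacts [hgen₁ s hs, hgen₂ s hs]

theorem reachIn_one {u v : Lamp n} (s : Lamp n)
    (hs : s ∈ ({lampT n, lampTA n} : Set (Lamp n)) ∨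
      ∃ g ∈ ({lampT n, lampTA n} : Set (Lamp n)), s = lampInv g)
    (hv : v = lampMul u s) : ReachIn n 1 u v :=
  ⟨[s], rfl, by simpa using hs, hv⟩

theorem lampTA_eq : lampTA n = ({1}, 1) := by
  simp [lampTA, lampMul, lampT, lampA]

theorem reachIn_step_right {x E : Set (ZMod n)} {p : ZMod n} (hE : E ⊆ {p + 1}) :
    ReachIn n 1 (x, p) (x ∆ E, p + 1) := by
  rcases Set.subset_singleton_iff_eq.1 hE with rfl | rfl
  · exact reachIn_one (lampT n) (by simp) (by simp [lampMul, lampT])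
  · exact reachIn_one (lampTA n) (by simp) (by simp [lampMul, lampTA_eq])

theorem reachIn_step_left {x E : Set (ZMod n)} {p : ZMod n} (hE : E ⊆ {p + 1}) :
    ReachIn n 1 (x, p + 1) (x ∆ E, p) := by
  rcases Set.subset_singleton_iff_eq.1 hE with rfl | rfl
  · exact reachIn_one (lampInv (lampT n)) (by simp) (by simp [lampMul, lampInv, lampT])
  · exact reachIn_one (lampInv (lampTA n)) (by simp) (by simp [lampMul, lampInv, lampTA_eq])

def arc (q : ZMod n) (m : ℕ) : Set (ZMod n) := (fun i : ℕ => q + i) '' Set.Ioc 0 m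

theorem arc_zero (q : ZMod n) : arc q 0 = ∅ := by
  simp [arc]

theorem mem_arc_of_le_val [NeZero n] {p M : ℕ} {z : ZMod n} (hp : p ≤ z.val)
    (hM : z.val ≤ M) : z ∈ arc ((p : ZMod n) - 1) (M + 1 - p) :=
  ⟨z.val + 1 - p, ⟨by omega, by omega⟩, by
    simp only [Nat.cast_sub_one_add_cast_sub (by omega : p ≤ z.val + 1), ZMod.natCast_zmod_val]⟩

theorem sdiff_subset_arc_of_subset_arc_succ {D : Set (ZMod n)} {q : ZMod n} {m : ℕ}
    (hD : D ⊆ arc q (m + 1)) : D \ {q + m + 1} ⊆ arc q m := by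
  rintro z ⟨hz, hzc⟩
  obtain ⟨i, ⟨hi₀, hi⟩, rfl⟩ := hD hz
  refine ⟨i, ⟨hi₀, Nat.le_of_lt_succ (lt_of_le_of_ne hi ?_)⟩, rfl⟩
  rintro rfl
  exact hzc (by rw [Set.mem_singleton_iff]; push_cast; ring)

theorem reachIn_sweep_right {x D : Set (ZMod n)} {q : ZMod n} {m : ℕ} (hD : D ⊆ arc q m) :
    ReachIn n m (x, q) (x ∆ D, q + m) := by
  induction m generalizing D with
  | zero =>
    rw [arc_zero, Set.subset_empty_iff] at hD
    simpa [hD, ← Set.bot_eq_empty] using reachIn_zero (x, q)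
  | succ m ih =>
    rw [Set.symmDiff_eq_symmDiff_sdiff_symmDiff_inter x D {q + m + 1}, Nat.cast_succ, ← add_assoc]
    exact (ih (sdiff_subset_arc_of_subset_arc_succ hD)).trans
      (reachIn_step_right Set.inter_subset_right)

theorem reachIn_sweep_left {x D : Set (ZMod n)} {q : ZMod n} {m : ℕ} (hD : D ⊆ arc q m) :
    ReachIn n m (x, q + m) (x ∆ D, q) := by
  induction m generalizing x D with
  | zero =>
    rw [arc_zero, Set.subset_empty_iff] at hD
    simpa [hD, ← Set.bot_eq_empty] using reachIn_zero (x, q)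
  | succ m ih =>
    rw [Set.symmDiff_eq_symmDiff_sdiff_symmDiff_inter x D {q + m + 1}, symmDiff_right_comm,
      Nat.cast_succ, ← add_assoc, Nat.add_comm m 1]
    exact (reachIn_step_left Set.inter_subset_right).trans
      (ih (sdiff_subset_arc_of_subset_arc_succ hD))

theorem reachIn_move_right (x : Set (ZMod n)) (p : ZMod n) (m : ℕ) :
    ReachIn n m (x, p) (x, p + m) := by
  simpa [← Set.bot_eq_empty] using reachIn_sweep_right (x := x) (Set.empty_subset (arc p m))

theorem reachIn_move_left (x : Set (ZMod n)) (p : ZMod n) (m : ℕ) :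
    ReachIn n m (x, p + m) (x, p) := by
  simpa [← Set.bot_eq_empty] using reachIn_sweep_left (x := x) (Set.empty_subset (arc p m))

theorem lampDist_le_of_symmDiff_subset_arc {x y : Set (ZMod n)} {q : ZMod n} {m a b : ℕ}
    (hxy : x ∆ y ⊆ arc q m) (ha : a ≤ m) (hb : b ≤ m) :
    lampDist n (x, q + a) (y, q + b) ≤ 2 * m + min a b - max a b := by
  have hshift : ∀ c ≤ m, q + (m : ZMod n) = q + c + ((m - c : ℕ) : ZMod n) := fun c hc => by
    push_cast [Nat.cast_sub hc]; ring
  rcases le_total a b with hab | hba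
  · have hsweep := symmDiff_symmDiff_cancel_left x y ▸ reachIn_sweep_right hxy
    have hpath := ((reachIn_move_left x q a).trans hsweep).trans
      (hshift b hb ▸ reachIn_move_left y (q + b) (m - b))
    exact (lampDist_le_of_reachIn hpath).trans (by omega)
  · have hsweep := symmDiff_symmDiff_cancel_left x y ▸ reachIn_sweep_left hxy
    have hpath := ((hshift a ha ▸ reachIn_move_right x (q + a) (m - a)).trans hsweep).trans
      (reachIn_move_right y q b)
    exact (lampDist_le_of_reachIn hpath).trans (by omega)

end Walks

theorem lgc_le_length_left (a b : List Bool) : lgc a b ≤ a.length := by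
  induction a, b using lgc.induct <;> simp_all [lgc]

theorem lgc_le_length_right (a b : List Bool) : lgc a b ≤ b.length := by
  induction a, b using lgc.induct <;> simp_all [lgc]

theorem getElem?_eq_of_lt_lgc {a b : List Bool} {i : ℕ} (h : i < lgc a b) : a[i]? = b[i]? := by
  induction a, b using lgc.induct generalizing i <;> cases i <;> simp_all [lgc]

section Phi1

variable {n : ℕ}

theorem length_phi1_fst (u : Lamp n) : (phi1 n u).1.length = u.2.val := by
  simp [phi1]

theorem length_phi1_snd (u : Lamp n) : (phi1 n u).2.length = n - u.2.val := by
  simp [phi1]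

theorem lgc_phi1_fst_le_min (u v : Lamp n) :
    lgc (phi1 n u).1 (phi1 n v).1 ≤ min u.2.val v.2.val :=
  le_min (length_phi1_fst u ▸ lgc_le_length_left _ _) (length_phi1_fst v ▸ lgc_le_length_right _ _)

theorem lgc_phi1_snd_le_sub_max (u v : Lamp n) :
    lgc (phi1 n u).2 (phi1 n v).2 ≤ n - max u.2.val v.2.val := by
  have hu := length_phi1_snd u ▸ lgc_le_length_left (phi1 n u).2 (phi1 n v).2
  have hv := length_phi1_snd v ▸ lgc_le_length_right (phi1 n u).2 (phi1 n v).2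
  omega

theorem mem_iff_mem_of_lt_lgc_phi1_fst {u v : Lamp n} {j : ℕ}
    (hj : j < lgc (phi1 n u).1 (phi1 n v).1) : (j : ZMod n) ∈ u.1 ↔ (j : ZMod n) ∈ v.1 := by
  have hjuv := hj.trans_le (lgc_phi1_fst_le_min u v)
  have hju : j < u.2.val := by omega
  have hjv : j < v.2.val := by omega
  simpa [phi1, hju, hjv] using getElem?_eq_of_lt_lgc hj

theorem mem_iff_mem_of_lt_lgc_phi1_snd {u v : Lamp n} {i : ℕ}
    (hi : i < lgc (phi1 n u).2 (phi1 n v).2) :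
    ((n - 1 - i : ℕ) : ZMod n) ∈ u.1 ↔ ((n - 1 - i : ℕ) : ZMod n) ∈ v.1 := by
  have hiuv := hi.trans_le (lgc_phi1_snd_le_sub_max u v)
  have hiu : i < n - u.2.val := by omega
  have hiv : i < n - v.2.val := by omega
  simpa [phi1, hiu, hiv] using getElem?_eq_of_lt_lgc hi

variable [NeZero n] {u v : Lamp n} {z : ZMod n}

theorem lgc_phi1_fst_le_val (hz : z ∈ u.1 ∆ v.1) : lgc (phi1 n u).1 (phi1 n v).1 ≤ z.val := by
  by_contra! h
  have := mem_iff_mem_of_lt_lgc_phi1_fst h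
  rw [ZMod.natCast_zmod_val] at this
  rw [Set.mem_symmDiff] at hz
  tauto

theorem val_add_lgc_phi1_snd_lt (hz : z ∈ u.1 ∆ v.1) :
    z.val + lgc (phi1 n u).2 (phi1 n v).2 < n := by
  by_contra! h
  have hzn := z.val_lt
  have := mem_iff_mem_of_lt_lgc_phi1_snd (u := u) (v := v) (show n - 1 - z.val < _ by omega)
  rw [Nat.sub_sub_self (by omega), ZMod.natCast_zmod_val] at this
  rw [Set.mem_symmDiff] at hz
  tauto

end Phi1

theorem lampDist_le_d1_phi1_general
    (n : ℕ) (hn : 0 < n)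
    (x y : Set (ZMod n)) (k l : ZMod n) :
    lampDist n (x, k) (y, l) ≤
      treeDist (phi1 n (x, k)).1 (phi1 n (y, l)).1 +
        treeDist (phi1 n (x, k)).2 (phi1 n (y, l)).2 + 2 := by
  have : NeZero n := ⟨hn.ne'⟩
  simp only [treeDist, length_phi1_fst, length_phi1_snd]
  have hp₁ := lgc_phi1_fst_le_min (x, k) (y, l)
  have hp₂ := lgc_phi1_snd_le_sub_max (x, k) (y, l)
  dsimp only at hp₁ hp₂ ⊢
  set p₁ := lgc (phi1 n (x, k)).1 (phi1 n (y, l)).1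
  set p₂ := lgc (phi1 n (x, k)).2 (phi1 n (y, l)).2
  set M := max (max k.val l.val) (n - 1 - p₂)
  have hxy : x ∆ y ⊆ arc ((p₁ : ZMod n) - 1) (M + 1 - p₁) := fun z hz =>
    mem_arc_of_le_val (lgc_phi1_fst_le_val (u := (x, k)) (v := (y, l)) hz)
      (by have := val_add_lgc_phi1_snd_lt (u := (x, k)) (v := (y, l)) hz; omega)
  have hdist := lampDist_le_of_symmDiff_subset_arc hxy
    (a := k.val + 1 - p₁) (b := l.val + 1 - p₁) (by omega) (by omega)
  rw [Nat.cast_sub_one_add_cast_sub (by omega), Nat.cast_sub_one_add_cast_sub (by omega),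
    ZMod.natCast_zmod_val, ZMod.natCast_zmod_val] at hdist
  have := k.val_lt
  have := l.val_lt
  omega

/-- For `(x,k), (y,l) ∈ P_{1,n}`: `ρ((x,k),(y,l)) ≤ d₁(φ_{1,n}(x,k), φ_{1,n}(y,l)) + 2`. -/
theorem lampDist_le_d1_phi1
    (n : ℕ) (hn : 0 < n) (h6 : 6 ∣ n)
    (x y : Set (ZMod n)) (k l : ZMod n)
    (hxk : ((x, k) : Lamp n) ∈ lampP1 n) (hyl : ((y, l) : Lamp n) ∈ lampP1 n) :
    lampDist n (x, k) (y, l) ≤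
      treeDist (phi1 n (x, k)).1 (phi1 n (y, l)).1 +
        treeDist (phi1 n (x, k)).2 (phi1 n (y, l)).2 + 2 :=
  lampDist_le_d1_phi1_general n hn x y k l
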